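/- arXiv:1303.5678 — 5 statements merged into one kernel-verified Lean document; each statement's English description precedes it below -/
import Mathlib

section
/- Let N, M1, M2, d0, d1, d2 be natural numbers, and let H1 be a complex N × M1 matrix and H2 a complex N × M2 matrix such that the N × (M1 + M2) block matrix A = [H1 H2] (H1 and H2 placed side by side) has rank min(N, M1 + M2). Suppose V ⊆ ℂ^N, U1 ⊆ ℂ^{M1}, U2 ⊆ ℂ^{M2} are ℂ-subspaces with dim V = d0, dim U1 = d1, dim U2 = d2, and that for all v ∈ V and u ∈ U1 the standard Hermitian inner product of v with H1·u is zero, and for all v ∈ V and u ∈ U2 the standard Hermitian inner product of v with H2·u is zero. Then d0 + d1 + d2 ≤ max(N, M1 + M2). -/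
/-!
Let `f = [H1 H2]` act on `ℂ^{M1} × ℂ^{M2}` and put `W = U1 × U2`. Since no nonzero vector is
self-orthogonal for the Hermitian product, `V` meets `f(W)` only in `0`, so
`d0 + dim f(W) ≤ N`; rank–nullity gives `d1 + d2 ≤ dim f(W) + (M1 + M2 - rank A)`. Adding,
`d0 + d1 + d2 ≤ N + (M1 + M2) - min N (M1 + M2) = max N (M1 + M2)`.
-/

open Matrix Module

theorem Submodule.finrank_prod {K M M₂ : Type*} [DivisionRing K] [AddCommGroup M] [Module K M]
    [AddCommGroup M₂] [Module K M₂] (p : Submodule K M) (q : Submodule K M₂)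
    [FiniteDimensional K p] [FiniteDimensional K q] :
    finrank K (p.prod q) = finrank K p + finrank K q := by
  rw [← Module.finrank_prod, ← LinearMap.finrank_range_of_inj (f := p.subtype.prodMap q.subtype)
    (Prod.map_injective.2 ⟨p.injective_subtype, q.injective_subtype⟩), LinearMap.range_prodMap,
    Submodule.range_subtype, Submodule.range_subtype]

theorem Submodule.finrank_le_finrank_map_add_finrank_ker {K E F : Type*} [DivisionRing K]
    [AddCommGroup E] [Module K E] [AddCommGroup F] [Module K F] [FiniteDimensional K E]
    (f : E →ₗ[K] F) (W : Submodule K E) :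
    finrank K W ≤ finrank K (W.map f) + finrank K (LinearMap.ker f) := by
  rw [← (f.domRestrict W).finrank_range_add_finrank_ker, LinearMap.range_domRestrict,
    LinearMap.ker_domRestrict]
  gcongr
  rw [← Submodule.finrank_map_subtype_eq]
  exact Submodule.finrank_mono (Submodule.map_comap_le _ _)

theorem LinearMap.finrank_add_finrank_add_finrank_range_le_of_disjoint {K E F : Type*}
    [DivisionRing K] [AddCommGroup E] [Module K E] [AddCommGroup F] [Module K F]
    [FiniteDimensional K E] [FiniteDimensional K F] (f : E →ₗ[K] F) {V : Submodule K F}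
    {W : Submodule K E} (h : Disjoint V (W.map f)) :
    finrank K V + finrank K W + finrank K (range f) ≤ finrank K F + finrank K E := by
  have hV := Submodule.finrank_add_finrank_le_of_disjoint h
  have hW := W.finrank_le_finrank_map_add_finrank_ker f
  have := f.finrank_range_add_finrank_ker
  omega

theorem Submodule.disjoint_of_star_dotProduct_eq_zero {R n : Type*} [Fintype n] [Ring R]
    [PartialOrder R] [StarRing R] [StarOrderedRing R] [NoZeroDivisors R]
    {V S : Submodule R (n → R)} (h : ∀ v ∈ V, ∀ s ∈ S, star v ⬝ᵥ s = 0) : Disjoint V S :=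
  Submodule.disjoint_def.2 fun v hv hs => dotProduct_star_self_eq_zero.1 (h v hv v hs)

theorem Matrix.range_mulVecLin_fromCols {R m n₁ n₂ : Type*} [CommRing R] [Fintype n₁]
    [Fintype n₂] (A₁ : Matrix m n₁ R) (A₂ : Matrix m n₂ R) :
    LinearMap.range (fromCols A₁ A₂).mulVecLin =
      LinearMap.range (A₁.mulVecLin.coprod A₂.mulVecLin) := by
  have : A₁.mulVecLin.coprod A₂.mulVecLin = (fromCols A₁ A₂).mulVecLin ∘ₗ
      (LinearEquiv.sumArrowLequivProdArrow n₁ n₂ R R).symm.toLinearMap :=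
    LinearMap.ext fun ⟨v₁, v₂⟩ => (fromCols_mulVec_sumElim A₁ A₂ v₁ v₂).symm
  rw [this, LinearMap.range_comp_of_range_eq_top _ (LinearEquiv.range _)]

/-- r = 1 case of the alignment-path necessary condition.
If the block matrix `A = [H1 H2]` has full rank, and `V` is orthogonal (for the
standard Hermitian inner product) to `H1·U1` and to `H2·U2`, then
`dim V + dim U1 + dim U2 ≤ max N (M1 + M2)`. -/
theorem alignment_path_r1_necessary
    (N M1 M2 d0 d1 d2 : ℕ)
    (H1 : Matrix (Fin N) (Fin M1) ℂ) (H2 : Matrix (Fin N) (Fin M2) ℂ)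
    (A : Matrix (Fin N) (Fin M1 ⊕ Fin M2) ℂ)
    (hA : A = Matrix.of fun i => Sum.elim (H1 i) (H2 i))
    (hrank : A.rank = min N (M1 + M2))
    (V : Submodule ℂ (Fin N → ℂ))
    (U1 : Submodule ℂ (Fin M1 → ℂ))
    (U2 : Submodule ℂ (Fin M2 → ℂ))
    (hV : Module.finrank ℂ V = d0)
    (hU1 : Module.finrank ℂ U1 = d1)
    (hU2 : Module.finrank ℂ U2 = d2)
    (h1 : ∀ v ∈ V, ∀ u ∈ U1, star v ⬝ᵥ H1.mulVec u = 0)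
    (h2 : ∀ v ∈ V, ∀ u ∈ U2, star v ⬝ᵥ H2.mulVec u = 0) :
    d0 + d1 + d2 ≤ max N (M1 + M2) := by
  set f := H1.mulVecLin.coprod H2.mulVecLin
  have hdisj : Disjoint V ((U1.prod U2).map f) := by
    open scoped ComplexOrder in refine Submodule.disjoint_of_star_dotProduct_eq_zero ?_
    rintro v hv _ ⟨⟨u₁, u₂⟩, ⟨hu₁, hu₂⟩, rfl⟩
    simp [f, dotProduct_add, h1 v hv u₁ hu₁, h2 v hv u₂ hu₂]
  have hrank_f : finrank ℂ (LinearMap.range f) = min N (M1 + M2) := by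
    rw [← hrank, hA, Matrix.rank]
    change _ = finrank ℂ (LinearMap.range (fromCols H1 H2).mulVecLin)
    rw [Matrix.range_mulVecLin_fromCols]
  have key := f.finrank_add_finrank_add_finrank_range_le_of_disjoint hdisj
  rw [Submodule.finrank_prod, hrank_f, Module.finrank_prod, Module.finrank_fin_fun,
    Module.finrank_fin_fun, Module.finrank_fin_fun] at key
  omega
end

section
/- Let N, M be natural numbers and let H i j, for ordered pairs i ≠ j in {1,2,3}, be channel matrices for the 3-user M×N MIMO interference channel. Fix r ≥ 1 and assume the cyclic alignment matrix A_r starting at receiver 1 has rank min(rN, (r+1)M). If a feasible alignment strategy with dimensions (d1, d2, d3) exists, then d⟨1⟩ + d⟨r+1⟩ + d⟨r+2⟩ + 2·(d⟨2⟩ + d⟨3⟩ + ⋯ + d⟨r⟩) ≤ max(rN, (r+1)M), where ⟨j⟩ ∈ {1,2,3} denotes j reduced modulo 3. -/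
/-
Stack the transmit subspaces `U⟨2⟩, …, U⟨r+2⟩` into `X ⊆ ℂ^((r+1)M)` and the receive subspaces
`V⟨1⟩, …, V⟨r⟩` into `Y ⊆ ℂ^(rN)`. Block row `j` of `A_r` pairs `V⟨j⟩` with `U⟨j+1⟩` and
`U⟨j+2⟩`, so the alignment conditions say exactly that `A_r X ⊥ Y`. Hence
`dim X - dim ker A_r ≤ dim A_r X ≤ rN - dim Y`, i.e. `dim X + dim Y + rank A_r ≤ rN + (r+1)M`,
and with `rank A_r = min (rN) ((r+1)M)` this gives `dim X + dim Y ≤ max (rN) ((r+1)M)`;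
`dim X + dim Y` is the weighted sum of the `d`'s in the statement.
-/

open Matrix
open Fin.NatCast

/-- The `rN × (r+1)M` block matrix whose `j`-th block row carries `B j` in block
column `j`, `C j` in block column `j+1`, and zero blocks elsewhere. -/
def alignBlock {r N M : ℕ} (B C : Fin r → Matrix (Fin N) (Fin M) ℂ) :
    Matrix (Fin r × Fin N) (Fin (r + 1) × Fin M) ℂ :=
  Matrix.of fun p q =>
    if (q.1 : ℕ) = (p.1 : ℕ) then B p.1 p.2 q.2
    else if (q.1 : ℕ) = (p.1 : ℕ) + 1 then C p.1 p.2 q.2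
    else 0

/-- The cyclic alignment matrix `A_q` starting at receiver `i` (users labelled
`0,1,2` for the paper's `1,2,3`): block row `j` (0-based) carries the channel
from transmitter `i+j+1` to receiver `i+j` and the channel from transmitter
`i+j+2` to receiver `i+j`, indices mod 3. -/
def cyclicAlign {N M : ℕ} (H : Fin 3 → Fin 3 → Matrix (Fin N) (Fin M) ℂ)
    (i : Fin 3) (q : ℕ) : Matrix (Fin q × Fin N) (Fin (q + 1) × Fin M) ℂ :=
  alignBlock
    (fun j => H (i + ((j : ℕ) : Fin 3)) (i + ((j : ℕ) : Fin 3) + 1))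
    (fun j => H (i + ((j : ℕ) : Fin 3)) (i + ((j : ℕ) : Fin 3) + 2))

/-- A feasible vector-space interference-alignment strategy with dimensions
`d i` for the 3-user channel with matrices `H i j` (channel from transmitter
`j` to receiver `i`). -/
def Feasible {N M : ℕ} (H : Fin 3 → Fin 3 → Matrix (Fin N) (Fin M) ℂ)
    (d : Fin 3 → ℕ) : Prop :=
  ∃ (U : Fin 3 → Submodule ℂ (Fin M → ℂ)) (V : Fin 3 → Submodule ℂ (Fin N → ℂ)),
    (∀ i, Module.finrank ℂ (U i) = d i) ∧
    (∀ i, Module.finrank ℂ (V i) = d i) ∧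
    (∀ i j, i ≠ j → ∀ u ∈ U j, ∀ v ∈ V i, star v ⬝ᵥ (H i j).mulVec u = 0)

/-- The Fin 3 label of the paper's user `⟨j⟩ ∈ {1,2,3}` (`j` reduced mod 3),
i.e. `(j-1) mod 3`, for `j ≥ 1`. -/
def userIdx (j : ℕ) : Fin 3 := ((j - 1 : ℕ) : Fin 3)

theorem Submodule.finrank_pi_univ {K ι : Type*} [Field K] [Fintype ι] {φ : ι → Type*}
    [∀ i, AddCommGroup (φ i)] [∀ i, Module K (φ i)] [∀ i, FiniteDimensional K (φ i)]
    (p : ∀ i, Submodule K (φ i)) :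
    Module.finrank K (Submodule.pi Set.univ p) = ∑ i, Module.finrank K (p i) := by
  have hrange : Submodule.pi Set.univ p =
      LinearMap.range (LinearMap.piMap fun i => (p i).subtype) := by
    ext x
    exact ⟨fun hx => ⟨fun i => ⟨x i, hx i trivial⟩, rfl⟩, by rintro ⟨y, rfl⟩ i -; exact (y i).2⟩
  rw [hrange, LinearMap.finrank_range_of_inj
    (Function.Injective.piMap fun i => Subtype.val_injective), Module.finrank_pi_fintype]

theorem Submodule.finrank_le_finrank_map_add_finrank_ker_s2 {K V W : Type*} [Field K]
    [AddCommGroup V] [Module K V] [AddCommGroup W] [Module K W] [FiniteDimensional K V]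
    (L : V →ₗ[K] W) (X : Submodule K V) :
    Module.finrank K X ≤ Module.finrank K (X.map L) + Module.finrank K (LinearMap.ker L) := by
  have h := LinearMap.finrank_range_add_finrank_ker (L.domRestrict X)
  rw [LinearMap.range_domRestrict, LinearMap.ker_domRestrict,
    ← Submodule.finrank_map_subtype_eq, Submodule.map_comap_subtype] at h
  have := Submodule.finrank_mono (inf_le_right : X ⊓ LinearMap.ker L ≤ LinearMap.ker L)
  omega

theorem Matrix.finrank_add_finrank_le_of_star_dotProduct_eq_zero {𝕜 m : Type*} [RCLike 𝕜]
    [Fintype m] (Y Z : Submodule 𝕜 (m → 𝕜)) (h : ∀ y ∈ Y, ∀ z ∈ Z, star y ⬝ᵥ z = 0) :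
    Module.finrank 𝕜 Y + Module.finrank 𝕜 Z ≤ Fintype.card m := by
  let e : (m → 𝕜) ≃ₗ[𝕜] EuclideanSpace 𝕜 m := (WithLp.linearEquiv 2 𝕜 (m → 𝕜)).symm
  have hZ : Z.map e.toLinearMap ≤ (Y.map e.toLinearMap)ᗮ := by
    rintro _ ⟨z, hz, rfl⟩
    rw [Submodule.mem_orthogonal]
    rintro _ ⟨y, hy, rfl⟩
    rw [EuclideanSpace.inner_eq_star_dotProduct, dotProduct_comm]
    exact h y hy z hz
  have hZ' := Submodule.finrank_mono hZ
  have hY := (Y.map e.toLinearMap).finrank_add_finrank_orthogonal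
  rw [LinearEquiv.finrank_map_eq] at hZ' hY
  rw [finrank_euclideanSpace] at hY
  omega

theorem Matrix.finrank_add_finrank_add_rank_le {𝕜 m n : Type*} [RCLike 𝕜] [Fintype m]
    [Fintype n] (A : Matrix m n 𝕜) (X : Submodule 𝕜 (n → 𝕜)) (Y : Submodule 𝕜 (m → 𝕜))
    (h : ∀ x ∈ X, ∀ y ∈ Y, star y ⬝ᵥ A *ᵥ x = 0) :
    Module.finrank 𝕜 X + Module.finrank 𝕜 Y + A.rank ≤ Fintype.card n + Fintype.card m := by
  have hX := Submodule.finrank_le_finrank_map_add_finrank_ker_s2 A.mulVecLin X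
  have hAX := finrank_add_finrank_le_of_star_dotProduct_eq_zero Y (X.map A.mulVecLin)
    (by rintro y hy _ ⟨x, hx, rfl⟩; exact h x hx y hy)
  have hA := LinearMap.finrank_range_add_finrank_ker A.mulVecLin
  rw [Module.finrank_fintype_fun_eq_card] at hA
  have : A.rank = Module.finrank 𝕜 (LinearMap.range A.mulVecLin) := rfl
  omega

def blockSubmodule {R ι κ : Type*} [Semiring R] (P : ι → Submodule R (κ → R)) :
    Submodule R (ι × κ → R) :=
  (Submodule.pi Set.univ P).comap (LinearEquiv.curry R R ι κ).toLinearMap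

theorem mem_blockSubmodule {R ι κ : Type*} [Semiring R] {P : ι → Submodule R (κ → R)}
    {x : ι × κ → R} : x ∈ blockSubmodule P ↔ ∀ i, (fun k => x (i, k)) ∈ P i := by
  simp only [blockSubmodule, Submodule.mem_comap, Submodule.mem_pi, Set.mem_univ, forall_const]
  rfl

theorem finrank_blockSubmodule {K ι κ : Type*} [Field K] [Fintype ι] [Fintype κ]
    (P : ι → Submodule K (κ → K)) :
    Module.finrank K (blockSubmodule P) = ∑ i, Module.finrank K (P i) := by
  rw [blockSubmodule, Submodule.comap_equiv_eq_map_symm, LinearEquiv.finrank_map_eq,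
    Submodule.finrank_pi_univ]

theorem alignBlock_apply {r N M : ℕ} (B C : Fin r → Matrix (Fin N) (Fin M) ℂ) (j : Fin r)
    (n : Fin N) (k : Fin (r + 1)) (m : Fin M) :
    alignBlock B C (j, n) (k, m) =
      (if k = j.castSucc then B j n m else 0) + (if k = j.succ then C j n m else 0) := by
  simp only [alignBlock, of_apply, Fin.ext_iff, Fin.val_castSucc, Fin.val_succ]
  split_ifs <;> first | omega | simp

theorem alignBlock_mulVec {r N M : ℕ} (B C : Fin r → Matrix (Fin N) (Fin M) ℂ)
    (x : Fin (r + 1) × Fin M → ℂ) (j : Fin r) (n : Fin N) :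
    (alignBlock B C *ᵥ x) (j, n) =
      (B j *ᵥ fun m => x (j.castSucc, m)) n + (C j *ᵥ fun m => x (j.succ, m)) n := by
  simp only [mulVec, dotProduct, Fintype.sum_prod_type, alignBlock_apply, add_mul, ite_mul,
    zero_mul, Finset.sum_add_distrib, Finset.sum_ite_irrel, Finset.sum_const_zero,
    Finset.sum_ite_eq', Finset.mem_univ, if_true]

theorem star_dotProduct_alignBlock_mulVec_eq_zero {r N M : ℕ}
    {B C : Fin r → Matrix (Fin N) (Fin M) ℂ} {P : Fin (r + 1) → Submodule ℂ (Fin M → ℂ)}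
    {Q : Fin r → Submodule ℂ (Fin N → ℂ)}
    (hB : ∀ j, ∀ u ∈ P j.castSucc, ∀ v ∈ Q j, star v ⬝ᵥ B j *ᵥ u = 0)
    (hC : ∀ j, ∀ u ∈ P j.succ, ∀ v ∈ Q j, star v ⬝ᵥ C j *ᵥ u = 0)
    {x : Fin (r + 1) × Fin M → ℂ} (hx : x ∈ blockSubmodule P)
    {y : Fin r × Fin N → ℂ} (hy : y ∈ blockSubmodule Q) :
    star y ⬝ᵥ alignBlock B C *ᵥ x = 0 := by
  rw [mem_blockSubmodule] at hx hy
  simp only [dotProduct, Fintype.sum_prod_type]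
  refine Finset.sum_eq_zero fun j _ => ?_
  have hBj := hB j _ (hx j.castSucc) _ (hy j)
  have hCj := hC j _ (hx j.succ) _ (hy j)
  simp only [dotProduct] at hBj hCj
  simp only [alignBlock_mulVec, mul_add, Finset.sum_add_distrib, Pi.star_apply] at hBj hCj ⊢
  rw [hBj, hCj, add_zero]

theorem Feasible.sum_add_sum_add_rank_le {N M : ℕ}
    {H : Fin 3 → Fin 3 → Matrix (Fin N) (Fin M) ℂ} {d : Fin 3 → ℕ} (h : Feasible H d)
    (i : Fin 3) (q : ℕ) :
    ∑ k : Fin (q + 1), d (i + ((k : ℕ) : Fin 3) + 1) + ∑ j : Fin q, d (i + ((j : ℕ) : Fin 3))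
        + (cyclicAlign H i q).rank ≤ (q + 1) * M + q * N := by
  obtain ⟨U, V, hU, hV, hUV⟩ := h
  have hne : ∀ a : Fin 3, a ≠ a + 1 ∧ a ≠ a + 2 := by decide
  have := Matrix.finrank_add_finrank_add_rank_le (cyclicAlign H i q)
    (blockSubmodule fun k : Fin (q + 1) => U (i + ((k : ℕ) : Fin 3) + 1))
    (blockSubmodule fun j : Fin q => V (i + ((j : ℕ) : Fin 3)))
    fun x hx y hy => star_dotProduct_alignBlock_mulVec_eq_zero
      (fun j u hu v hv => hUV _ _ (hne _).1 u (by simpa using hu) v hv)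
      (fun j u hu v hv => hUV _ _ (hne _).2 u
        (by simpa [add_assoc, one_add_one_eq_two] using hu) v hv) hx hy
  simpa only [finrank_blockSubmodule, hU, hV, Fintype.card_prod, Fintype.card_fin] using this

theorem add_two_mul_sum_Icc_eq {R : Type*} [CommSemiring R] (g : ℕ → R) {r : ℕ} (hr : 1 ≤ r) :
    g 1 + g (r + 1) + g (r + 2) + 2 * ∑ j ∈ Finset.Icc 2 r, g j =
      ∑ i ∈ Finset.range (r + 1), g (i + 2) + ∑ i ∈ Finset.range r, g (i + 1) := by
  induction r, hr using Nat.le_induction with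
  | base => simp [Finset.sum_range_succ]; ring
  | succ r hr ih =>
    rw [Finset.sum_Icc_succ_top (by omega), Finset.sum_range_succ (fun i => g (i + 2)),
      Finset.sum_range_succ (fun i => g (i + 1))]
    calc _ = (g 1 + g (r + 1) + g (r + 2) + 2 * ∑ j ∈ Finset.Icc 2 r, g j)
          + (g (r + 3) + g (r + 1)) := by ring
      _ = _ := by rw [ih]; ring

/-- Corollary 4. If the cyclic alignment matrix `A_r` starting
at receiver 1 has full rank and a feasible strategy with dimensions
`(d1, d2, d3)` exists, then
`d⟨1⟩ + d⟨r+1⟩ + d⟨r+2⟩ + 2(d⟨2⟩+⋯+d⟨r⟩) ≤ max (rN) ((r+1)M)`. -/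
theorem three_user_cyclic_necessary
    (N M r : ℕ) (hr : 1 ≤ r)
    (H : Fin 3 → Fin 3 → Matrix (Fin N) (Fin M) ℂ)
    (d : Fin 3 → ℕ)
    (hrank : (cyclicAlign H 0 r).rank = min (r * N) ((r + 1) * M))
    (hfeas : Feasible H d) :
    d (userIdx 1) + d (userIdx (r + 1)) + d (userIdx (r + 2))
        + 2 * ∑ j ∈ Finset.Icc 2 r, d (userIdx j)
      ≤ max (r * N) ((r + 1) * M) := by
  have hbound := hfeas.sum_add_sum_add_rank_le 0 r
  have hU : ∑ k : Fin (r + 1), d (0 + ((k : ℕ) : Fin 3) + 1) =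
      ∑ i ∈ Finset.range (r + 1), d (userIdx (i + 2)) := by
    rw [← Fin.sum_univ_eq_sum_range]
    simp [userIdx]
  have hV : ∑ j : Fin r, d (0 + ((j : ℕ) : Fin 3)) =
      ∑ i ∈ Finset.range r, d (userIdx (i + 1)) := by
    rw [← Fin.sum_univ_eq_sum_range]
    simp [userIdx]
  rw [add_two_mul_sum_Icc_eq (fun j => d (userIdx j)) hr]
  omega
end

section
/- Let d ≥ 1 and N ≥ 2d be natural numbers, and let H i j, for ordered pairs i ≠ j in {1,2,3}, be channel matrices for the 3-user N×N MIMO interference channel. For each pair i ≠ j let Ĥ i j denote the top-left 2d × 2d corner submatrix of H i j. Assume every Ĥ i j is invertible and that the matrix B = Ĥ 1 2 · (Ĥ 3 2)⁻¹ · Ĥ 3 1 · (Ĥ 2 1)⁻¹ · Ĥ 2 3 · (Ĥ 1 3)⁻¹ is diagonalizable over ℂ (i.e., ℂ^{2d} has a basis of eigenvectors of B). Then a feasible alignment strategy with dimensions (d, d, d) exists. -/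
open Matrix

/-!
Work in the top-left `2d × 2d` corner and pad with zeros. Let `E` be spanned by `d` eigenvectors
of `B`, so `B E ⊆ E`, and choose the transmit spaces backwards along the cycle (users `0, 1, 2`):
`U₂ = Ĥ₀₂⁻¹ E`, `U₀ = Ĥ₁₀⁻¹ Ĥ₁₂ U₂`, `U₁ = Ĥ₂₁⁻¹ Ĥ₂₀ U₀`. At receivers `1` and `2` the two
interfering images then coincide, and at receiver `0` they are `E` and `B E ⊆ E`. So every
receiver sees interference of dimension at most `d` in `ℂ^{2d}`, and its orthogonal complement
holds a `d`-dimensional receive space.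
-/

open Module Submodule Function

theorem star_extend_zero_dotProduct {R m n : Type*} [Fintype m] [Fintype n]
    [NonUnitalNonAssocSemiring R] [StarRing R] {e : m → n} (he : Function.Injective e)
    (x : m → R) (y : n → R) :
    star (extend e x 0) ⬝ᵥ y = star x ⬝ᵥ (y ∘ e) := by
  refine (Fintype.sum_of_injective e he _ _ (fun c hc => ?_) fun r => ?_).symm
  · simp [extend_apply' _ _ _ (fun ⟨r, hr⟩ => hc ⟨r, hr⟩)]
  · simp [he.extend_apply]

theorem mulVec_extend_zero {R l m n : Type*} [Fintype m] [Fintype n]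
    [NonUnitalNonAssocSemiring R] {f : m → n} (hf : Function.Injective f) (A : Matrix l n R)
    (x : m → R) :
    A *ᵥ extend f x 0 = A.submatrix id f *ᵥ x := by
  funext r
  refine (Fintype.sum_of_injective f hf _ _ (fun c hc => ?_) fun c => ?_).symm
  · simp [extend_apply' _ _ _ (fun ⟨r, hr⟩ => hc ⟨r, hr⟩)]
  · simp [hf.extend_apply]

theorem finrank_map_extendByZero {K m n : Type*} [Field K] {e : m → n}
    (he : Function.Injective e) (W : Submodule K (m → K)) :
    finrank K (W.map (ExtendByZero.linearMap K e)) = finrank K W :=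
  (equivMapOfInjective _ (extend_injective he (0 : n → K)) W).finrank_eq.symm

theorem Feasible.of_submatrix {N M n m : ℕ} {H : Fin 3 → Fin 3 → Matrix (Fin N) (Fin M) ℂ}
    {e : Fin n → Fin N} {f : Fin m → Fin M} (he : Function.Injective e)
    (hf : Function.Injective f)
    {d : Fin 3 → ℕ} (h : Feasible (fun i j => (H i j).submatrix e f) d) : Feasible H d := by
  obtain ⟨U, V, hU, hV, horth⟩ := h
  refine ⟨fun j => (U j).map (ExtendByZero.linearMap ℂ f),
    fun i => (V i).map (ExtendByZero.linearMap ℂ e), fun j => ?_, fun i => ?_, ?_⟩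
  · rw [finrank_map_extendByZero hf, hU]
  · rw [finrank_map_extendByZero he, hV]
  rintro i j hij _ ⟨u, hu, rfl⟩ _ ⟨v, hv, rfl⟩
  change star (extend e v 0) ⬝ᵥ H i j *ᵥ extend f u 0 = 0
  rw [mulVec_extend_zero hf, star_extend_zero_dotProduct he]
  exact horth i j hij u hu v hv

theorem Submodule.exists_le_finrank_eq {K M : Type*} [DivisionRing K] [AddCommGroup M]
    [Module K M] (W : Submodule K M) {k : ℕ} (hk : k ≤ finrank K W) :
    ∃ V ≤ W, finrank K V = k := by
  obtain ⟨g, hg⟩ := exists_linearIndependent_of_le_finrank hk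
  refine ⟨span K (Set.range (W.subtype ∘ g)), span_le.mpr ?_, ?_⟩
  · rintro _ ⟨r, rfl⟩
    exact (g r).2
  · rw [finrank_span_eq_card (hg.map' _ W.ker_subtype), Fintype.card_fin]

theorem exists_finrank_eq_star_dotProduct_eq_zero {𝕜 ι : Type*} [RCLike 𝕜] [Fintype ι]
    (S : Submodule 𝕜 (ι → 𝕜)) {k : ℕ} (hk : finrank 𝕜 S + k ≤ Fintype.card ι) :
    ∃ V : Submodule 𝕜 (ι → 𝕜), finrank 𝕜 V = k ∧ ∀ v ∈ V, ∀ s ∈ S, star v ⬝ᵥ s = 0 := by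
  let e := WithLp.linearEquiv 2 𝕜 (ι → 𝕜)
  let S' := S.map (e.symm : (ι → 𝕜) →ₗ[𝕜] EuclideanSpace 𝕜 ι)
  have hk' : k ≤ finrank 𝕜 (S'ᗮ.map (e : EuclideanSpace 𝕜 ι →ₗ[𝕜] ι → 𝕜)) := by
    have := S'.finrank_add_finrank_orthogonal
    rw [finrank_euclideanSpace, e.symm.finrank_map_eq] at this
    rw [e.finrank_map_eq]
    omega
  obtain ⟨V, hVle, hV⟩ := (S'ᗮ.map (e : EuclideanSpace 𝕜 ι →ₗ[𝕜] ι → 𝕜)).exists_le_finrank_eq hk'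
  refine ⟨V, hV, fun v hv s hs => ?_⟩
  have hv' : e.symm v ∈ S'ᗮ := (mem_map_equiv _).mp (hVle hv)
  have h := inner_left_of_mem_orthogonal (mem_map_of_mem hs : e.symm s ∈ S') hv'
  rw [EuclideanSpace.inner_eq_star_dotProduct, dotProduct_comm] at h
  exact h

theorem feasible_of_map_le {N M : ℕ} {H : Fin 3 → Fin 3 → Matrix (Fin N) (Fin M) ℂ}
    {d : Fin 3 → ℕ} (U : Fin 3 → Submodule ℂ (Fin M → ℂ)) (S : Fin 3 → Submodule ℂ (Fin N → ℂ))
    (hU : ∀ j, finrank ℂ (U j) = d j) (hS : ∀ i, finrank ℂ (S i) + d i ≤ N)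
    (hUS : ∀ i j, i ≠ j → (U j).map (H i j).mulVecLin ≤ S i) : Feasible H d := by
  choose V hV horth using fun i =>
    exists_finrank_eq_star_dotProduct_eq_zero (S i) (by simpa using hS i)
  exact ⟨U, V, hU, hV, fun i j hij u hu v hv =>
    horth i v hv _ (hUS i j hij (mem_map_of_mem hu))⟩

theorem Module.Basis.exists_finrank_eq_map_le_of_eigenvectors {K V ι : Type*} [Field K]
    [AddCommGroup V] [Module K V] (f : V →ₗ[K] V) (b : Basis ι K V)
    (hb : ∀ k, ∃ μ : K, f (b k) = μ • b k) {m : ℕ} (g : Fin m → ι)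
    (hg : Function.Injective g) :
    ∃ E : Submodule K V, finrank K E = m ∧ E.map f ≤ E := by
  refine ⟨span K (Set.range (b ∘ g)),
    by rw [finrank_span_eq_card (b.linearIndependent.comp g hg), Fintype.card_fin], ?_⟩
  rw [map_span_le]
  rintro _ ⟨k, rfl⟩
  obtain ⟨μ, hμ⟩ := hb (g k)
  rw [Function.comp_apply, hμ]
  exact smul_mem _ _ (subset_span ⟨k, rfl⟩)

theorem finrank_map_mulVecLin_of_isUnit {K n : Type*} [Field K] [Fintype n] [DecidableEq n]
    {A : Matrix n n K} (hA : IsUnit A) (E : Submodule K (n → K)) :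
    finrank K (E.map A.mulVecLin) = finrank K E :=
  (equivMapOfInjective _ (mulVec_injective_iff_isUnit.mpr hA) E).finrank_eq.symm

theorem exists_alignment_of_map_cycle_le {K n : Type*} [Field K] [Fintype n] [DecidableEq n]
    {Ĥ : Fin 3 → Fin 3 → Matrix n n K} (hĤ : ∀ i j, i ≠ j → IsUnit (Ĥ i j))
    (E : Submodule K (n → K))
    (hE : E.map (Ĥ 0 1 * (Ĥ 2 1)⁻¹ * Ĥ 2 0 * (Ĥ 1 0)⁻¹ * Ĥ 1 2 * (Ĥ 0 2)⁻¹).mulVecLin ≤ E) :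
    ∃ U S : Fin 3 → Submodule K (n → K), (∀ j, finrank K (U j) = finrank K E) ∧
      (∀ i, finrank K (S i) ≤ finrank K E) ∧
      ∀ i j, i ≠ j → (U j).map (Ĥ i j).mulVecLin ≤ S i := by
  have hdet : ∀ i j, i ≠ j → (Ĥ i j).det ≠ 0 := fun i j hij =>
    ((isUnit_iff_isUnit_det _).mp (hĤ i j hij)).ne_zero
  let P : Fin 3 → Matrix n n K := ![(Ĥ 1 0)⁻¹ * Ĥ 1 2 * (Ĥ 0 2)⁻¹,
    (Ĥ 2 1)⁻¹ * Ĥ 2 0 * (Ĥ 1 0)⁻¹ * Ĥ 1 2 * (Ĥ 0 2)⁻¹, (Ĥ 0 2)⁻¹]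
  let Q : Fin 3 → Matrix n n K := ![1, Ĥ 1 2 * (Ĥ 0 2)⁻¹,
    Ĥ 2 0 * (Ĥ 1 0)⁻¹ * Ĥ 1 2 * (Ĥ 0 2)⁻¹]
  refine ⟨fun j => E.map (P j).mulVecLin, fun i => E.map (Q i).mulVecLin,
    fun j => finrank_map_mulVecLin_of_isUnit ?_ E, fun i => finrank_map_le _ _, ?_⟩
  · fin_cases j <;> simp [P, isUnit_iff_isUnit_det, hdet]
  -- `Ĥ i j * P j = Q i` for every interfering pair except `Ĥ 0 1 * P 1 = B`.
  intro i j hij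
  rw [← map_comp, ← mulVecLin_mul]
  fin_cases i <;> fin_cases j <;> simp_all [P, Q, ← Matrix.mul_assoc, mul_nonsing_inv]

theorem three_user_square_achievable_general
    (d N : ℕ) (hN : 2 * d ≤ N)
    (H : Fin 3 → Fin 3 → Matrix (Fin N) (Fin N) ℂ)
    (Hhat : Fin 3 → Fin 3 → Matrix (Fin (2 * d)) (Fin (2 * d)) ℂ)
    (hHhat : ∀ i j : Fin 3,
      Hhat i j = (H i j).submatrix (Fin.castLE hN) (Fin.castLE hN))
    (hinv : ∀ i j : Fin 3, i ≠ j → IsUnit (Hhat i j))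
    (B : Matrix (Fin (2 * d)) (Fin (2 * d)) ℂ)
    (hB : B = Hhat 0 1 * (Hhat 2 1)⁻¹ * Hhat 2 0 * (Hhat 1 0)⁻¹
        * Hhat 1 2 * (Hhat 0 2)⁻¹)
    (hdiag : ∃ b : Module.Basis (Fin (2 * d)) ℂ (Fin (2 * d) → ℂ),
      ∀ k, ∃ μ : ℂ, B.mulVec (b k) = μ • b k) :
    Feasible H (fun _ => d) := by
  obtain ⟨b, hb⟩ := hdiag
  obtain ⟨E, hEd, hBE⟩ := b.exists_finrank_eq_map_le_of_eigenvectors B.mulVecLin hb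
    (Fin.castLE (n := d) (by omega)) (Fin.castLE_injective _)
  obtain ⟨U, S, hU, hS, hUS⟩ := exists_alignment_of_map_cycle_le hinv E (hB ▸ hBE)
  have hcorner : Feasible Hhat (fun _ => d) :=
    feasible_of_map_le U S (fun j => (hU j).trans hEd) (fun i => by linarith [hS i]) hUS
  obtain rfl : Hhat = fun i j => (H i j).submatrix (Fin.castLE hN) (Fin.castLE hN) :=
    funext₂ hHhat
  exact hcorner.of_submatrix (Fin.castLE_injective hN) (Fin.castLE_injective hN)

/-- Proposition 9, achievability for `K = 3`, `M = N ≥ 2d`.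
If the top-left `2d × 2d` corners `Ĥ i j` of the channel matrices are invertible
and the product `B = Ĥ12 Ĥ32⁻¹ Ĥ31 Ĥ21⁻¹ Ĥ23 Ĥ13⁻¹` (users labelled `0,1,2`)
is diagonalizable over `ℂ`, then a feasible strategy with dimensions `(d,d,d)`
exists. -/
theorem three_user_square_achievable
    (d N : ℕ) (hd : 1 ≤ d) (hN : 2 * d ≤ N)
    (H : Fin 3 → Fin 3 → Matrix (Fin N) (Fin N) ℂ)
    (Hhat : Fin 3 → Fin 3 → Matrix (Fin (2 * d)) (Fin (2 * d)) ℂ)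
    (hHhat : ∀ i j : Fin 3,
      Hhat i j = (H i j).submatrix (Fin.castLE hN) (Fin.castLE hN))
    (hinv : ∀ i j : Fin 3, i ≠ j → IsUnit (Hhat i j))
    (B : Matrix (Fin (2 * d)) (Fin (2 * d)) ℂ)
    (hB : B = Hhat 0 1 * (Hhat 2 1)⁻¹ * Hhat 2 0 * (Hhat 1 0)⁻¹
        * Hhat 1 2 * (Hhat 0 2)⁻¹)
    (hdiag : ∃ b : Module.Basis (Fin (2 * d)) ℂ (Fin (2 * d) → ℂ),
      ∀ k, ∃ μ : ℂ, B.mulVec (b k) = μ • b k) :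
    Feasible H (fun _ => d) :=
  three_user_square_achievable_general d N hN H Hhat hHhat hinv B hB hdiag
end

section
/- Let d ≥ 1 and N = 2d, and let H i j, for ordered pairs i ≠ j in {1,2,3}, be invertible complex 2d × 2d channel matrices for the 3-user 2d×2d MIMO interference channel. Assume the matrix B = H 1 2 · (H 3 2)⁻¹ · H 3 1 · (H 2 1)⁻¹ · H 2 3 · (H 1 3)⁻¹ has 2d pairwise distinct eigenvalues. Then there exist at least C(2d, d) (the binomial coefficient) pairwise distinct feasible alignment strategies with dimensions (d, d, d), where two strategies are distinct if they differ as tuples of subspaces (U_1,U_2,U_3,V_1,V_2,V_3). -/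
/-!
A feasible strategy of dimension `d` in `ℂ^{2d}` forces every receiver to see its two
interferers in one common `d`-dimensional subspace `Wᵢ = H i j Uⱼ = H i k Uₖ`, and then
`Vᵢ = Wᵢ^⊥`. Going once around the cycle of users,
`W₀ → U₂ = H₀₂⁻¹ W₀ → W₁ = H₁₂ U₂ → U₀ = H₁₀⁻¹ W₁ → W₂ = H₂₀ U₀ → U₁ = H₂₁⁻¹ W₂ → H₀₁ U₁ = B W₀`,
so the constraints close up exactly when `W₀` is `B`-invariant. Every `d`-element set of the
`2d` eigenvectors of `B` spans such a `W₀`, and by linear independence distinct sets span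
distinct subspaces, which gives `C(2d, d)` distinct strategies.
-/

open Matrix Module Submodule

section Span

variable {R ι M : Type*} [AddCommGroup M] {v : ι → M}

theorem LinearIndependent.subset_of_span_image_le [Ring R] [Nontrivial R] [Module R M]
    (hv : LinearIndependent R v) {s t : Set ι} (h : span R (v '' s) ≤ span R (v '' t)) :
    s ⊆ t := fun k hk => by
  by_contra hkt
  exact hv.notMem_span_image hkt (h (subset_span ⟨k, hk, rfl⟩))

theorem LinearIndependent.span_image_injective [Ring R] [Nontrivial R] [Module R M]
    (hv : LinearIndependent R v) : Function.Injective fun s : Set ι => span R (v '' s) :=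
  fun _ _ h => (hv.subset_of_span_image_le h.le).antisymm (hv.subset_of_span_image_le h.ge)

theorem LinearIndependent.finrank_span_image [Ring R] [Nontrivial R] [StrongRankCondition R]
    [Module R M] (hv : LinearIndependent R v) (s : Finset ι) :
    finrank R (span R (v '' s)) = s.card := by
  rw [Set.image_eq_range]
  exact (finrank_span_eq_card (hv.comp _ Subtype.val_injective)).trans (Fintype.card_coe s)

theorem Module.End.map_span_eigenvectors_le [CommRing R] [Module R M] (f : End R M)
    {μ : ι → R} (hv : ∀ k, f (v k) = μ k • v k) (s : Set ι) :
    (span R (v '' s)).map f ≤ span R (v '' s) := by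
  rw [map_span, span_le]
  rintro _ ⟨_, ⟨k, hk, rfl⟩, rfl⟩
  simpa [hv k] using (span R (v '' s)).smul_mem (μ k) (subset_span ⟨k, hk, rfl⟩)

end Span

theorem Matrix.map_mulVecLin_mul {R n : Type*} [CommSemiring R] [Fintype n]
    (A B : Matrix n n R) (W : Submodule R (n → R)) :
    W.map (A * B).mulVecLin = (W.map B.mulVecLin).map A.mulVecLin := by
  rw [mulVecLin_mul, map_comp]

theorem Matrix.finrank_map_mulVecLin {K n : Type*} [Field K] [Fintype n] [DecidableEq n]
    {A : Matrix n n K} (hA : IsUnit A) (W : Submodule K (n → K)) :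
    finrank K (W.map A.mulVecLin) = finrank K W :=
  (W.equivMapOfInjective _ (mulVec_injective_iff_isUnit.mpr hA)).finrank_eq.symm

section DotOrthogonal

variable {𝕜 n : Type*} [RCLike 𝕜] [Fintype n]

noncomputable def Submodule.dotOrthogonal (W : Submodule 𝕜 (n → 𝕜)) : Submodule 𝕜 (n → 𝕜) :=
  ((W.map (WithLp.linearEquiv 2 𝕜 (n → 𝕜)).symm.toLinearMap)ᗮ).map
    (WithLp.linearEquiv 2 𝕜 (n → 𝕜)).toLinearMap

theorem Submodule.mem_dotOrthogonal {W : Submodule 𝕜 (n → 𝕜)} {w : n → 𝕜} :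
    w ∈ W.dotOrthogonal ↔ ∀ x ∈ W, star w ⬝ᵥ x = 0 := by
  simp only [dotOrthogonal, mem_map_equiv, mem_orthogonal', LinearEquiv.symm_symm]
  refine ⟨fun h x hx => ?_, fun h u hu => ?_⟩
  · simpa [EuclideanSpace.inner_toLp_toLp, dotProduct_comm] using h (WithLp.toLp 2 x) hx
  · simpa [EuclideanSpace.inner_eq_star_dotProduct, dotProduct_comm] using h _ hu

theorem Submodule.finrank_dotOrthogonal (W : Submodule 𝕜 (n → 𝕜)) :
    finrank 𝕜 W.dotOrthogonal = Fintype.card n - finrank 𝕜 W := by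
  have := (W.map (WithLp.linearEquiv 2 𝕜 (n → 𝕜)).symm.toLinearMap).finrank_add_finrank_orthogonal
  rw [LinearEquiv.finrank_map_eq, finrank_euclideanSpace] at this
  rw [dotOrthogonal, LinearEquiv.finrank_map_eq]
  omega

end DotOrthogonal

section Channel

variable {K n : Type*} [Field K] [Fintype n] [DecidableEq n] (H : Fin 3 → Fin 3 → Matrix n n K)

-- Users are `0, 1, 2`; `H i j` is the channel from transmitter `j` to receiver `i`.
noncomputable def cycleMatrix : Matrix n n K :=
  H 0 1 * (H 2 1)⁻¹ * H 2 0 * (H 1 0)⁻¹ * H 1 2 * (H 0 2)⁻¹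

-- `Uⱼ` and `Wᵢ` of the cycle in the header are the images of `W₀` under these matrices.
noncomputable def transmitMatrix : Fin 3 → Matrix n n K :=
  ![(H 1 0)⁻¹ * H 1 2 * (H 0 2)⁻¹, (H 2 1)⁻¹ * H 2 0 * (H 1 0)⁻¹ * H 1 2 * (H 0 2)⁻¹, (H 0 2)⁻¹]

noncomputable def interferenceMatrix : Fin 3 → Matrix n n K :=
  ![1, H 1 2 * (H 0 2)⁻¹, H 2 0 * (H 1 0)⁻¹ * H 1 2 * (H 0 2)⁻¹]

variable {H}

theorem mul_transmitMatrix_one : H 0 1 * transmitMatrix H 1 = cycleMatrix H := by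
  simp [transmitMatrix, cycleMatrix, Matrix.mul_assoc]

theorem isUnit_transmitMatrix (hinv : ∀ i j : Fin 3, i ≠ j → IsUnit (H i j)) (j : Fin 3) :
    IsUnit (transmitMatrix H j) := by
  have hdet : ∀ i j : Fin 3, i ≠ j → (H i j).det ≠ 0 := fun i j hij =>
    ((isUnit_iff_isUnit_det _).mp (hinv i j hij)).ne_zero
  fin_cases j <;> simp [transmitMatrix, isUnit_iff_isUnit_det, hdet]

theorem isUnit_interferenceMatrix (hinv : ∀ i j : Fin 3, i ≠ j → IsUnit (H i j)) (i : Fin 3) :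
    IsUnit (interferenceMatrix H i) := by
  have hdet : ∀ i j : Fin 3, i ≠ j → (H i j).det ≠ 0 := fun i j hij =>
    ((isUnit_iff_isUnit_det _).mp (hinv i j hij)).ne_zero
  fin_cases i <;> simp [interferenceMatrix, isUnit_iff_isUnit_det, hdet]

theorem mul_transmitMatrix (hinv : ∀ i j : Fin 3, i ≠ j → IsUnit (H i j)) {i j : Fin 3}
    (hij : i ≠ j) (h01 : (i, j) ≠ (0, 1)) :
    H i j * transmitMatrix H j = interferenceMatrix H i := by
  have hdet : ∀ i j : Fin 3, i ≠ j → IsUnit (H i j).det := fun i j hij =>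
    (isUnit_iff_isUnit_det _).mp (hinv i j hij)
  have h02 := mul_nonsing_inv _ (hdet 0 2 (by decide))
  have h10 := mul_nonsing_inv _ (hdet 1 0 (by decide))
  have h21 := mul_nonsing_inv _ (hdet 2 1 (by decide))
  fin_cases i <;> fin_cases j <;> first
    | exact absurd rfl hij
    | exact absurd rfl h01
    | simp [transmitMatrix, interferenceMatrix, ← Matrix.mul_assoc, h02, h10, h21]

theorem map_transmitMatrix_le (hinv : ∀ i j : Fin 3, i ≠ j → IsUnit (H i j))
    {W : Submodule K (n → K)} (hW : W.map (cycleMatrix H).mulVecLin ≤ W) {i j : Fin 3}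
    (hij : i ≠ j) :
    (W.map (transmitMatrix H j).mulVecLin).map (H i j).mulVecLin ≤
      W.map (interferenceMatrix H i).mulVecLin := by
  rw [← map_mulVecLin_mul]
  by_cases h01 : (i, j) = (0, 1)
  · obtain ⟨rfl, rfl⟩ := Prod.ext_iff.mp h01
    simpa [mul_transmitMatrix_one, interferenceMatrix] using hW
  · rw [mul_transmitMatrix hinv hij h01]

end Channel

section Strategy

variable {𝕜 n : Type*} [RCLike 𝕜] [Fintype n] [DecidableEq n] (H : Fin 3 → Fin 3 → Matrix n n 𝕜)

def IsFeasibleAlignment (d : ℕ)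
    (p : (Fin 3 → Submodule 𝕜 (n → 𝕜)) × (Fin 3 → Submodule 𝕜 (n → 𝕜))) : Prop :=
  (∀ i, finrank 𝕜 (p.1 i) = d) ∧ (∀ i, finrank 𝕜 (p.2 i) = d) ∧
    ∀ i j, i ≠ j → ∀ u ∈ p.1 j, ∀ w ∈ p.2 i, star w ⬝ᵥ (H i j).mulVec u = 0

noncomputable def alignmentOfSubspace (W : Submodule 𝕜 (n → 𝕜)) :
    (Fin 3 → Submodule 𝕜 (n → 𝕜)) × (Fin 3 → Submodule 𝕜 (n → 𝕜)) :=
  (fun j => W.map (transmitMatrix H j).mulVecLin,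
    fun i => (W.map (interferenceMatrix H i).mulVecLin).dotOrthogonal)

variable {H}

theorem alignmentOfSubspace_injective (hinv : ∀ i j : Fin 3, i ≠ j → IsUnit (H i j)) :
    Function.Injective (alignmentOfSubspace H) :=
  fun _ _ h => map_injective_of_injective
    (mulVec_injective_iff_isUnit.mpr (isUnit_transmitMatrix hinv 2))
    (congrFun (congrArg Prod.fst h) 2)

theorem isFeasibleAlignment_alignmentOfSubspace (hinv : ∀ i j : Fin 3, i ≠ j → IsUnit (H i j))
    {W : Submodule 𝕜 (n → 𝕜)} {d : ℕ}
    (hW : W.map (cycleMatrix H).mulVecLin ≤ W) (hWd : finrank 𝕜 W = d)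
    (hn : Fintype.card n = 2 * d) : IsFeasibleAlignment H d (alignmentOfSubspace H W) := by
  refine ⟨fun j => ?_, fun i => ?_, fun i j hij u hu w hw => ?_⟩
  · rw [alignmentOfSubspace, finrank_map_mulVecLin (isUnit_transmitMatrix hinv j), hWd]
  · rw [alignmentOfSubspace, finrank_dotOrthogonal,
      finrank_map_mulVecLin (isUnit_interferenceMatrix hinv i), hWd, hn]
    omega
  · exact mem_dotOrthogonal.mp hw _ (map_transmitMatrix_le hinv hW hij ⟨u, hu, rfl⟩)

end Strategy

theorem three_user_count_solutions_general
    (d : ℕ)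
    (H : Fin 3 → Fin 3 → Matrix (Fin (2 * d)) (Fin (2 * d)) ℂ)
    (hinv : ∀ i j : Fin 3, i ≠ j → IsUnit (H i j))
    (B : Matrix (Fin (2 * d)) (Fin (2 * d)) ℂ)
    (hB : B = H 0 1 * (H 2 1)⁻¹ * H 2 0 * (H 1 0)⁻¹ * H 1 2 * (H 0 2)⁻¹)
    (μ : Fin (2 * d) → ℂ) (v : Fin (2 * d) → (Fin (2 * d) → ℂ))
    (hμ : Function.Injective μ)
    (hv : ∀ k, v k ≠ 0 ∧ B.mulVec (v k) = μ k • v k) :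
    ∃ S : Finset ((Fin 3 → Submodule ℂ (Fin (2 * d) → ℂ))
        × (Fin 3 → Submodule ℂ (Fin (2 * d) → ℂ))),
      Nat.choose (2 * d) d ≤ S.card ∧
      ∀ p ∈ S,
        (∀ i, Module.finrank ℂ (p.1 i) = d) ∧
        (∀ i, Module.finrank ℂ (p.2 i) = d) ∧
        (∀ i j, i ≠ j → ∀ u ∈ p.1 j, ∀ w ∈ p.2 i,
          star w ⬝ᵥ (H i j).mulVec u = 0) := by
  have hli : LinearIndependent ℂ v :=
    Module.End.eigenvectors_linearIndependent' B.mulVecLin μ hμ v fun k =>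
      ⟨Module.End.mem_eigenspace_iff.mpr (hv k).2, (hv k).1⟩
  have hinvariant (T : Finset (Fin (2 * d))) :
      (span ℂ (v '' T)).map (cycleMatrix H).mulVecLin ≤ span ℂ (v '' T) := by
    rw [cycleMatrix, ← hB]
    exact Module.End.map_span_eigenvectors_le B.mulVecLin (fun k => (hv k).2) _
  let strategy (T : Finset (Fin (2 * d))) := alignmentOfSubspace H (span ℂ (v '' T))
  have hinj : Function.Injective strategy :=
    (alignmentOfSubspace_injective hinv).comp (hli.span_image_injective.comp Finset.coe_injective)
  refine ⟨(Finset.powersetCard d Finset.univ).image strategy, ?_, ?_⟩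
  · simp [Finset.card_image_of_injective _ hinj]
  · simp only [Finset.mem_image, Finset.mem_powersetCard]
    rintro _ ⟨T, ⟨-, hT⟩, rfl⟩
    exact isFeasibleAlignment_alignmentOfSubspace hinv (hinvariant T)
      ((hli.finrank_span_image T).trans hT) (Fintype.card_fin _)

/-- solution count in Proposition 9, `N = 2d`. If all channel
matrices are invertible and `B = H12 H32⁻¹ H31 H21⁻¹ H23 H13⁻¹` (users labelled
`0,1,2`) has `2d` pairwise distinct eigenvalues, then there are at least
`C(2d, d)` pairwise distinct feasible alignment strategies with dimensions
`(d,d,d)`, strategies being tuples `(U₁,U₂,U₃,V₁,V₂,V₃)` of subspaces. -/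
theorem three_user_count_solutions
    (d : ℕ) (hd : 1 ≤ d)
    (H : Fin 3 → Fin 3 → Matrix (Fin (2 * d)) (Fin (2 * d)) ℂ)
    (hinv : ∀ i j : Fin 3, i ≠ j → IsUnit (H i j))
    (B : Matrix (Fin (2 * d)) (Fin (2 * d)) ℂ)
    (hB : B = H 0 1 * (H 2 1)⁻¹ * H 2 0 * (H 1 0)⁻¹ * H 1 2 * (H 0 2)⁻¹)
    (μ : Fin (2 * d) → ℂ) (v : Fin (2 * d) → (Fin (2 * d) → ℂ))
    (hμ : Function.Injective μ)
    (hv : ∀ k, v k ≠ 0 ∧ B.mulVec (v k) = μ k • v k) :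
    ∃ S : Finset ((Fin 3 → Submodule ℂ (Fin (2 * d) → ℂ))
        × (Fin 3 → Submodule ℂ (Fin (2 * d) → ℂ))),
      Nat.choose (2 * d) d ≤ S.card ∧
      ∀ p ∈ S,
        (∀ i, Module.finrank ℂ (p.1 i) = d) ∧
        (∀ i, Module.finrank ℂ (p.2 i) = d) ∧
        (∀ i j, i ≠ j → ∀ u ∈ p.1 j, ∀ w ∈ p.2 i,
          star w ⬝ᵥ (H i j).mulVec u = 0) :=
  three_user_count_solutions_general d H hinv B hB μ v hμ hv
end

section
/- Let r ≥ 1 and M ≤ N be natural numbers. Let B be the N × M complex matrix consisting of the M × M identity matrix stacked above an (N−M) × M zero block, and let C be the N × M complex matrix consisting of an (N−M) × M zero block stacked above the M × M identity matrix. Then the rN × (r+1)M block matrix A_r associated to B1 = ⋯ = Br = B and C1 = ⋯ = Cr = C has rank min(rN, (r+1)M). -/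
open Matrix

/-- The `N × M` matrix (`M ≤ N`) consisting of the `M × M` identity stacked
above an `(N-M) × M` zero block. -/
def idTop (N M : ℕ) : Matrix (Fin N) (Fin M) ℂ :=
  Matrix.of fun i j => if (i : ℕ) = (j : ℕ) then 1 else 0

/-- The `N × M` matrix (`M ≤ N`) consisting of an `(N-M) × M` zero block stacked
above the `M × M` identity. -/
def idBottom (N M : ℕ) : Matrix (Fin N) (Fin M) ℂ :=
  Matrix.of fun i j => if (i : ℕ) = (j : ℕ) + (N - M) then 1 else 0

/-!
Encode `y : Fin (r + 1) × Fin M → ℂ` as the polynomials `Y k = ∑ l, y (k, l) X^l` of degree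
`< M`, and put `d = N - M`. The `(j, i)` entry of `A_r y` is then the `X^i` coefficient of
`Y j + X^d Y (j+1)`, so `A_r y = 0` forces `Y k = (-X^d)^(r-k) Y r`. Since `Y 0 = ± X^(rd) Y r`
has degree `< M`, the last block `Y r` has degree `< M - rd` (truncated: `0` once `M ≤ rd`) and
determines `y`. Hence the nullity is at most `M - rd`, and rank–nullity gives
`rank A_r ≥ (r+1)M - (M - rd) = min (rN) ((r+1)M)`.
-/

open Polynomial

theorem Polynomial.eq_neg_X_pow_pow_mul_of_chain {R : Type*} [CommRing R] {r d : ℕ}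
    {Y : Fin (r + 1) → R[X]} (h : ∀ j : Fin r, Y j.castSucc + X ^ d * Y j.succ = 0)
    (k : Fin (r + 1)) : Y k = (-X ^ d) ^ (r - k) * Y (Fin.last r) := by
  induction k using Fin.reverseInduction with
  | last => simp
  | cast j ih =>
    have hj : r - j = r - (j + 1) + 1 := by omega
    rw [eq_neg_of_add_eq_zero_left (h j), ih, Fin.val_castSucc, hj, pow_succ, Fin.val_succ]
    ring

theorem Polynomial.coeff_neg_X_pow_pow_mul {R : Type*} [CommRing R] (d m n : ℕ) (p : R[X]) :
    ((-X ^ d) ^ m * p).coeff (n + m * d) = (-1) ^ m * p.coeff n := by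
  rw [neg_pow, ← pow_mul, mul_assoc, mul_comm d, ← C_1, ← C_neg, ← C_pow, coeff_C_mul,
    coeff_X_pow_mul]

abbrev specializedAlignBlock (r N M : ℕ) : Matrix (Fin r × Fin N) (Fin (r + 1) × Fin M) ℂ :=
  alignBlock (fun _ => idTop N M) (fun _ => idBottom N M)

namespace specializedAlignBlock

variable {r N M : ℕ}

theorem mulVec_apply (y : Fin (r + 1) × Fin M → ℂ) (j : Fin r) (i : Fin N) :
    (specializedAlignBlock r N M *ᵥ y) (j, i) =
      (ofFn M (Function.curry y j.castSucc) +
        X ^ (N - M) * ofFn M (Function.curry y j.succ)).coeff i := by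
  simp only [ofFn_eq_sum_monomial, Finset.mul_sum, X_pow_mul_monomial, coeff_add,
    finsetSum_coeff, coeff_monomial]
  rw [mulVec, dotProduct, Fintype.sum_prod_type, Fintype.sum_eq_add j.castSucc j.succ]
  · simp [alignBlock, idTop, idBottom, eq_comm]
  · simp [Fin.ext_iff]
  · intro k hk
    simp only [ne_eq, Fin.ext_iff, Fin.val_castSucc, Fin.val_succ] at hk
    simp [alignBlock, hk]

theorem ofFn_add_X_pow_mul_ofFn_eq_zero (hMN : M ≤ N) {y : Fin (r + 1) × Fin M → ℂ}
    (hy : specializedAlignBlock r N M *ᵥ y = 0) (j : Fin r) :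
    ofFn M (Function.curry y j.castSucc) + X ^ (N - M) * ofFn M (Function.curry y j.succ) = 0 := by
  ext n
  rw [coeff_zero]
  by_cases hn : n < N
  · rw [← mulVec_apply y j ⟨n, hn⟩, hy, Pi.zero_apply]
  · rw [coeff_add, coeff_X_pow_mul', ofFn_coeff_eq_zero_of_ge _ (by omega), if_pos (by omega),
      ofFn_coeff_eq_zero_of_ge _ (by omega), add_zero]

theorem eq_zero_of_mulVec_eq_zero (hMN : M ≤ N) {y : Fin (r + 1) × Fin M → ℂ}
    (hy : specializedAlignBlock r N M *ᵥ y = 0)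
    (hlast : ∀ l : Fin M, (l : ℕ) < M - r * (N - M) → y (Fin.last r, l) = 0) : y = 0 := by
  have hchain := eq_neg_X_pow_pow_mul_of_chain (Y := fun k => ofFn M (Function.curry y k))
    (ofFn_add_X_pow_mul_ofFn_eq_zero hMN hy)
  have hlast_zero : ofFn M (Function.curry y (Fin.last r)) = 0 := by
    ext n
    rw [coeff_zero]
    by_cases hn : n < M - r * (N - M)
    · rw [ofFn_coeff_eq_val_of_lt _ (by omega)]
      exact hlast ⟨n, by omega⟩ hn
    · have hfirst := congrArg (coeff · (n + r * (N - M))) (hchain 0)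
      simp only [Fin.val_zero, Nat.sub_zero, coeff_neg_X_pow_pow_mul,
        ofFn_coeff_eq_zero_of_ge _ (show M ≤ n + r * (N - M) by omega)] at hfirst
      simpa using hfirst
  ext ⟨k, l⟩
  simpa [hlast_zero] using congrArg (coeff · l) (hchain k)

theorem finrank_ker_mulVecLin_le (hMN : M ≤ N) :
    Module.finrank ℂ (LinearMap.ker (specializedAlignBlock r N M).mulVecLin) ≤
      M - r * (N - M) := by
  let restrictLast : (Fin (r + 1) × Fin M → ℂ) →ₗ[ℂ] Fin (M - r * (N - M)) → ℂ :=
    LinearMap.funLeft ℂ ℂ fun l => (Fin.last r, Fin.castLE (Nat.sub_le _ _) l)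
  have hinj : Function.Injective
      (restrictLast ∘ₗ (LinearMap.ker (specializedAlignBlock r N M).mulVecLin).subtype) := by
    rw [← LinearMap.ker_eq_bot, LinearMap.ker_eq_bot']
    rintro ⟨y, hy⟩ hlast
    rw [Submodule.mk_eq_zero]
    refine eq_zero_of_mulVec_eq_zero hMN hy fun l hl => ?_
    simpa [restrictLast] using congrFun hlast ⟨l, hl⟩
  simpa using LinearMap.finrank_le_finrank_of_injective hinj

end specializedAlignBlock

theorem specialized_alignBlock_full_rank_general
    (r N M : ℕ) (hMN : M ≤ N) :
    (alignBlock (fun _ : Fin r => idTop N M) (fun _ : Fin r => idBottom N M)).rank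
      = min (r * N) ((r + 1) * M) := by
  change (specializedAlignBlock r N M).rank = _
  have hker := specializedAlignBlock.finrank_ker_mulVecLin_le (r := r) hMN
  have hnullity :=
    LinearMap.finrank_range_add_finrank_ker (specializedAlignBlock r N M).mulVecLin
  have hrows := (specializedAlignBlock r N M).rank_le_card_height
  have hcols := (specializedAlignBlock r N M).rank_le_card_width
  simp only [Module.finrank_fintype_fun_eq_card, Fintype.card_prod, Fintype.card_fin]
    at hnullity hrows hcols
  rw [← Matrix.rank] at hnullity
  have hN : r * N = r * M + r * (N - M) := by rw [← Nat.mul_add, Nat.add_sub_cancel' hMN]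
  rw [add_mul, one_mul] at hnullity hcols ⊢
  omega

/-- specialization in the proof of Lemma 11. For `M ≤ N`, the
block matrix `A_r` built with `B_j = idTop` and `C_j = idBottom` for all `j` has
full rank `min (rN) ((r+1)M)`. -/
theorem specialized_alignBlock_full_rank
    (r N M : ℕ) (hr : 1 ≤ r) (hMN : M ≤ N) :
    (alignBlock (fun _ : Fin r => idTop N M) (fun _ : Fin r => idBottom N M)).rank
      = min (r * N) ((r + 1) * M) :=
  specialized_alignBlock_full_rank_general r N M hMN
end
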